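/- Let d ≥ 2 and let T be an infinite d-ary rooted tree which is not complete, say with |L_m| < d^m vertices at some level m ≥ 1, where L_m is the set of level-m vertices of T. Then dim_upper(Aut(T)) ≤ |L_m|/d^m < 1; in particular, the upper Minkowski dimension of Aut(T) is strictly less than 1. -/

import Mathlib

open scoped Classical

noncomputable section

/-! ### Minkowski dimension machinery for groups of automorphisms of rooted trees

A rooted tree is presented by its levels `V 0, V 1, V 2, …` (with `V 0` the root level)
together with parent maps `V (n+1) → V n`.  An automorphism is a family of permutations
of the levels commuting with the parent maps; it is in particular determined by a point of
`∀ k, Equiv.Perm (V k)`.  The restriction `r_n σ` of `σ` to the height-`n` subtree is the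
tuple `(σ 0, …, σ n)`, and the natural metric is
`d(σ,τ) = inf { d!^{-(dⁿ-1)/(d-1)} : r_n σ = r_n τ }`. -/

/-- The exponent `(dⁿ - 1)/(d - 1) = 1 + d + ⋯ + d^(n-1)`. -/
def scaleExp (d n : ℕ) : ℕ := ∑ i ∈ Finset.range n, d ^ i

/-- The scale `ε_n = d!^{-(dⁿ-1)/(d-1)}`, i.e. `1/|Aut(Tₙᶜᵒᵐ)|`. -/
def treeScale (d n : ℕ) : ℝ := ((d.factorial : ℝ) ^ scaleExp d n)⁻¹

/-- Two families of level permutations restrict to the same automorphism of the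
height-`n` subtree. -/
def AgreeUpTo {V : ℕ → Type*} (n : ℕ) (σ τ : ∀ k, Equiv.Perm (V k)) : Prop :=
  ∀ k, k ≤ n → σ k = τ k

/-- The natural metric on automorphisms of a rooted `d`-ary tree:
`d(σ,τ) = inf { d!^{-(dⁿ-1)/(d-1)} : σ and τ agree on the height-n subtree }`. -/
def treeDist {V : ℕ → Type*} (d : ℕ) (σ τ : ∀ k, Equiv.Perm (V k)) : ℝ :=
  sInf {x : ℝ | ∃ n : ℕ, AgreeUpTo n σ τ ∧ x = treeScale d n}

/-- `N_{ε_n}(G)`: the least number of balls of radius `ε_n = treeScale d n` needed to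
cover `G`. -/
def coverNum {V : ℕ → Type*} (d : ℕ) (G : Set (∀ k, Equiv.Perm (V k))) (n : ℕ) : ℕ :=
  sInf {m : ℕ | ∃ s : Finset (∀ k, Equiv.Perm (V k)), s.card = m ∧
    G ⊆ ⋃ σ ∈ s, {τ | treeDist d σ τ ≤ treeScale d n}}

/-- The lower Minkowski dimension `liminf_{ε → 0} log N_ε(G) / log (1/ε)` (computed
along the scales `ε_n` of the metric). -/
def dimLower {V : ℕ → Type*} (d : ℕ) (G : Set (∀ k, Equiv.Perm (V k))) : ℝ :=
  Filter.liminf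
    (fun n : ℕ => Real.log (coverNum d G n : ℝ) / Real.log (1 / treeScale d n)) Filter.atTop

/-- The upper Minkowski dimension `limsup_{ε → 0} log N_ε(G) / log (1/ε)` (computed
along the scales `ε_n` of the metric). -/
def dimUpper {V : ℕ → Type*} (d : ℕ) (G : Set (∀ k, Equiv.Perm (V k))) : ℝ :=
  Filter.limsup
    (fun n : ℕ => Real.log (coverNum d G n : ℝ) / Real.log (1 / treeScale d n)) Filter.atTop

/-- The Minkowski dimension of `G` exists and equals `x`. -/
def HasDim {V : ℕ → Type*} (d : ℕ) (G : Set (∀ k, Equiv.Perm (V k))) (x : ℝ) : Prop :=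
  dimLower d G = x ∧ dimUpper d G = x

/-- `G` is closed for the natural metric. -/
def IsDistClosed {V : ℕ → Type*} (d : ℕ) (G : Set (∀ k, Equiv.Perm (V k))) : Prop :=
  ∀ σ, (∀ ε : ℝ, 0 < ε → ∃ τ ∈ G, treeDist d σ τ ≤ ε) → σ ∈ G

/-- The closure of `G` for the natural metric. -/
def distClosure {V : ℕ → Type*} (d : ℕ) (G : Set (∀ k, Equiv.Perm (V k))) :
    Set (∀ k, Equiv.Perm (V k)) :=
  {σ | ∀ ε : ℝ, 0 < ε → ∃ τ ∈ G, treeDist d σ τ ≤ ε}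

/-- `|r_n(G)|`: the cardinality of the restriction of `G` to the height-`n` subtree. -/
def levelCard {V : ℕ → Type*} (G : Set (∀ k, Equiv.Perm (V k))) (n : ℕ) : ℕ :=
  Nat.card ((fun (σ : ∀ k, Equiv.Perm (V k)) (k : Fin (n + 1)) => σ k.1) '' G)

end
noncomputable section

/-- An infinite `d`-ary rooted tree, presented by its levels: `V n` is the set of
level-`n` vertices, `parent` maps a vertex to its parent, there is a unique root,
and every vertex has at least `1` and at most `d` children. -/
structure DaryTree (d : ℕ) where
  V : ℕ → Type
  parent : ∀ n, V (n + 1) → V n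
  root_card : Nat.card (V 0) = 1
  child_lb : ∀ n (v : V n), 1 ≤ Nat.card {w : V (n + 1) // parent n w = v}
  child_ub : ∀ n (v : V n), Nat.card {w : V (n + 1) // parent n w = v} ≤ d

/-- The group of automorphisms of a rooted tree presented by levels and parent maps:
families of level permutations fixing the root level structure and commuting with
the parent maps. -/
def autGroup {V : ℕ → Type*} (parent : ∀ n, V (n + 1) → V n) :
    Subgroup (∀ n, Equiv.Perm (V n)) where
  carrier := {σ | ∀ n (v : V (n + 1)), parent n (σ (n + 1) v) = σ n (parent n v)}
  one_mem' := by intro n v; rfl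
  mul_mem' := by
    intro a b ha hb n v
    simp only [Pi.mul_apply, Equiv.Perm.mul_apply]
    rw [ha, hb]
  inv_mem' := by
    intro a ha n v
    simp only [Pi.inv_apply]
    have h := ha n ((a (n + 1))⁻¹ v)
    rw [Equiv.Perm.coe_inv, Equiv.apply_symm_apply] at h
    rw [h]; exact ((a n).symm_apply_apply (parent n ((a (n + 1)).symm v))).symm

/-- The automorphism group `Aut(T)` of an infinite `d`-ary rooted tree. -/
def DaryTree.aut {d : ℕ} (T : DaryTree d) : Subgroup (∀ n, Equiv.Perm (T.V n)) :=
  autGroup T.parent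

/-- A `d`-ary rooted tree is complete if every vertex has exactly `d` children. -/
def DaryTree.IsComplete {d : ℕ} (T : DaryTree d) : Prop :=
  ∀ n (v : T.V n), Nat.card {w : T.V (n + 1) // T.parent n w = v} = d

end

/-! Automorphisms agreeing on levels `0, …, n` are at distance at most `ε_n`, so `N_{ε_n}(Aut T)` is
bounded by the size of a set of automorphisms meeting every restriction to `T_n`. Two
automorphisms with the same restriction to `T_k` differ on level `k + 1` by a permutation
preserving the parent map, of which there are at most `d!^{|L_k|}`; hence
`N_{ε_n} ≤ d!^{|L_0| + ⋯ + |L_{n-1}|}`. As `|L_{m+i}| ≤ |L_m| dⁱ`, the exponent is at most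
`C + |L_m| (1 + d + ⋯ + d^{n-m-1})`, whereas `log (1/ε_n) = (1 + d + ⋯ + d^{n-1}) log d!`, and
the ratio of the two tends to at most `|L_m|/dᵐ`. -/

open Filter Topology Equiv

lemma card_le_mul_card_of_card_fiber_le {α ι : Type*} [Finite ι] {f : α → ι} {d : ℕ}
    (hfin : ∀ i, Finite {a // f a = i}) (hf : ∀ i, Nat.card {a // f a = i} ≤ d) :
    Nat.card α ≤ d * Nat.card ι := by
  have := Fintype.ofFinite ι
  calc Nat.card α = ∑ i, Nat.card {a // f a = i} :=
        (Nat.card_congr (Equiv.sigmaFiberEquiv f).symm).trans Nat.card_sigma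
    _ ≤ ∑ _i : ι, d := Finset.sum_le_sum fun i _ ↦ hf i
    _ = d * Nat.card ι := by simp [mul_comm]

lemma ncard_perm_comp_eq_le {α ι : Type*} [Finite α] [Finite ι] {f : α → ι} {d : ℕ}
    (hf : ∀ i, Nat.card {a // f a = i} ≤ d) :
    {g : Perm α | f ∘ g = f}.ncard ≤ d.factorial ^ Nat.card ι := by
  have := Fintype.ofFinite ι
  rw [DomMulAct.stabilizer_ncard, Nat.card_eq_fintype_card, ← Finset.card_univ, ← Finset.prod_const]
  exact Finset.prod_le_prod' fun i _ ↦ Nat.factorial_le (by rw [← Nat.card_coe_set_eq]; exact hf i)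

section Nets

variable {V : ℕ → Type*}

lemma treeScale_pos (d n : ℕ) : 0 < treeScale d n := by
  unfold treeScale
  have := d.factorial_pos
  positivity

lemma treeDist_le_of_agreeUpTo (d : ℕ) {n : ℕ} {σ τ : ∀ k, Perm (V k)} (h : AgreeUpTo n σ τ) :
    treeDist d σ τ ≤ treeScale d n :=
  csInf_le ⟨0, by rintro x ⟨k, -, rfl⟩; exact (treeScale_pos d k).le⟩ ⟨n, h, rfl⟩

lemma coverNum_le_card {d n : ℕ} {G : Set (∀ k, Perm (V k))} (s : Finset (∀ k, Perm (V k)))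
    (hs : ∀ σ ∈ G, ∃ τ ∈ s, AgreeUpTo n τ σ) : coverNum d G n ≤ s.card :=
  Nat.sInf_le ⟨s, rfl, fun σ hσ ↦ by
    obtain ⟨τ, hτ, hτσ⟩ := hs σ hσ
    exact Set.mem_biUnion hτ (treeDist_le_of_agreeUpTo d hτσ)⟩

variable {parent : ∀ n, V (n + 1) → V n}

lemma parent_comp_inv_mul_eq {n : ℕ} {σ τ : ∀ k, Perm (V k)} (hσ : σ ∈ autGroup parent)
    (hτ : τ ∈ autGroup parent) (h : σ n = τ n) :
    parent n ∘ ⇑((σ (n + 1))⁻¹ * τ (n + 1)) = parent n := by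
  funext w
  have := (autGroup parent).mul_mem ((autGroup parent).inv_mem hσ) hτ n w
  simpa [h] using this

lemma exists_agreeUpTo_succ_finset {G : Set (∀ k, Perm (V k))} (hG : G ⊆ autGroup parent)
    {n : ℕ} [Finite (V (n + 1))] {s : Finset (∀ k, Perm (V k))} (hsG : ↑s ⊆ G)
    (hs : ∀ σ ∈ G, ∃ τ ∈ s, AgreeUpTo n τ σ) :
    ∃ t : Finset (∀ k, Perm (V k)), ↑t ⊆ G ∧ (∀ σ ∈ G, ∃ τ ∈ t, AgreeUpTo (n + 1) τ σ) ∧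
      t.card ≤ s.card * {π : Perm (V (n + 1)) | parent n ∘ π = parent n}.ncard := by
  -- An element of `G` agreeing with `τ` up to level `n` is `τ (n + 1) * π` on level `n + 1`,
  -- with `π` parent-preserving; `lift` picks one such element for each `π`.
  set P := {π : Perm (V (n + 1)) | parent n ∘ π = parent n}
  let lift : (∀ k, Perm (V k)) × Perm (V (n + 1)) → ∀ k, Perm (V k) := fun p ↦
    if h : ∃ ρ ∈ G, AgreeUpTo n p.1 ρ ∧ ρ (n + 1) = p.1 (n + 1) * p.2 then h.choose else p.1
  refine ⟨(s ×ˢ (Set.toFinite P).toFinset).image lift, ?_, ?_, ?_⟩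
  · intro ρ hρ
    obtain ⟨⟨τ, π⟩, hτπ, rfl⟩ := Finset.mem_image.mp hρ
    simp only [lift]
    split_ifs with h
    · exact h.choose_spec.1
    · exact hsG (Finset.mem_product.mp hτπ).1
  · intro σ hσ
    obtain ⟨τ, hτs, hτσ⟩ := hs σ hσ
    have h : ∃ ρ ∈ G, AgreeUpTo n τ ρ ∧ ρ (n + 1) = τ (n + 1) * ((τ (n + 1))⁻¹ * σ (n + 1)) :=
      ⟨σ, hσ, hτσ, by group⟩
    obtain ⟨-, hτρ, hρσ⟩ := h.choose_spec
    refine ⟨h.choose, Finset.mem_image.mpr ⟨(τ, (τ (n + 1))⁻¹ * σ (n + 1)), ?_, dif_pos h⟩, ?_⟩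
    · refine Finset.mem_product.mpr ⟨hτs, (Set.toFinite P).mem_toFinset.mpr ?_⟩
      exact parent_comp_inv_mul_eq (hG (hsG hτs)) (hG hσ) (hτσ n le_rfl)
    · intro k hk
      rcases Nat.lt_or_eq_of_le hk with hk | rfl
      · rw [← hτρ k (by omega), hτσ k (by omega)]
      · rw [hρσ, mul_inv_cancel_left]
  · calc _ ≤ (s ×ˢ (Set.toFinite P).toFinset).card := Finset.card_image_le
      _ = s.card * P.ncard := by rw [Finset.card_product, Set.ncard_eq_toFinset_card]

lemma exists_agreeUpTo_finset [∀ k, Finite (V k)] [Subsingleton (V 0)] {d : ℕ}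
    (hub : ∀ n (v : V n), Nat.card {w // parent n w = v} ≤ d) (n : ℕ) :
    ∃ s : Finset (∀ k, Perm (V k)), ↑s ⊆ (autGroup parent : Set (∀ k, Perm (V k))) ∧
      (∀ σ ∈ autGroup parent, ∃ τ ∈ s, AgreeUpTo n τ σ) ∧
      s.card ≤ d.factorial ^ ∑ k ∈ Finset.range n, Nat.card (V k) := by
  induction n with
  | zero =>
    refine ⟨{1}, by simp, fun σ _ ↦ ⟨1, Finset.mem_singleton_self 1, ?_⟩, by simp⟩
    intro k hk
    obtain rfl : k = 0 := by omega
    exact Subsingleton.elim _ _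
  | succ n ih =>
    obtain ⟨s, hsG, hs, hcard⟩ := ih
    obtain ⟨t, htG, ht, htcard⟩ := exists_agreeUpTo_succ_finset le_rfl hsG hs
    refine ⟨t, htG, ht, htcard.trans ?_⟩
    rw [Finset.sum_range_succ, pow_add]
    exact Nat.mul_le_mul hcard (ncard_perm_comp_eq_le (hub n))

lemma coverNum_autGroup_le [∀ k, Finite (V k)] [Subsingleton (V 0)] {d : ℕ}
    (hub : ∀ n (v : V n), Nat.card {w // parent n w = v} ≤ d) (n : ℕ) :
    coverNum d (autGroup parent : Set (∀ k, Perm (V k))) n ≤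
      d.factorial ^ ∑ k ∈ Finset.range n, Nat.card (V k) :=
  have ⟨s, _, hs, hcard⟩ := exists_agreeUpTo_finset hub n
  (coverNum_le_card s hs).trans hcard

end Nets

namespace DaryTree

variable {d : ℕ} (T : DaryTree d)

lemma finite_children {n : ℕ} (v : T.V n) : Finite {w // T.parent n w = v} :=
  Nat.finite_of_card_ne_zero (by have := T.child_lb n v; omega)

instance finite_V (n : ℕ) : Finite (T.V n) := by
  induction n with
  | zero => exact Nat.finite_of_card_ne_zero (by simp [T.root_card])
  | succ n ih =>
    have (v : T.V n) := T.finite_children v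
    exact Finite.of_equiv _ (Equiv.sigmaFiberEquiv (T.parent n))

instance subsingleton_V_zero : Subsingleton (T.V 0) :=
  (Nat.card_eq_one_iff_unique.mp T.root_card).1

lemma card_V_add_le (m k : ℕ) : Nat.card (T.V (m + k)) ≤ Nat.card (T.V m) * d ^ k := by
  induction k with
  | zero => simp
  | succ k ih =>
    calc Nat.card (T.V (m + k + 1)) ≤ d * Nat.card (T.V (m + k)) :=
          card_le_mul_card_of_card_fiber_le T.finite_children (T.child_ub _)
      _ ≤ d * (Nat.card (T.V m) * d ^ k) := Nat.mul_le_mul_left d ih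
      _ = Nat.card (T.V m) * d ^ (k + 1) := by ring

end DaryTree

section Scales

open Finset

lemma scaleExp_add (d m k : ℕ) : scaleExp d (m + k) = scaleExp d m + d ^ m * scaleExp d k := by
  simp only [scaleExp, sum_range_add, mul_sum, pow_add]

lemma tendsto_scaleExp_atTop {d : ℕ} (hd : 0 < d) :
    Tendsto (fun n ↦ (scaleExp d n : ℝ)) atTop atTop := by
  refine tendsto_natCast_atTop_atTop.comp (tendsto_atTop_mono (fun n ↦ ?_) tendsto_id)
  calc n = ∑ _i ∈ range n, 1 := by simp
    _ ≤ scaleExp d n := sum_le_sum fun i _ ↦ Nat.one_le_pow i d hd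

lemma sum_div_scaleExp_le {N : ℕ → ℕ} {d m : ℕ} (hd : 0 < d)
    (hN : ∀ k, N (m + k) ≤ N m * d ^ k) (k : ℕ) :
    ((∑ j ∈ range (m + k), N j : ℕ) : ℝ) / scaleExp d (m + k) ≤
      ((∑ j ∈ range m, N j : ℕ) : ℝ) / scaleExp d (m + k) + N m / (d : ℝ) ^ m := by
  have hsum : ∑ j ∈ range (m + k), N j ≤ ∑ j ∈ range m, N j + N m * scaleExp d k := by
    rw [sum_range_add, scaleExp, mul_sum]
    exact Nat.add_le_add_left (sum_le_sum fun i _ ↦ hN i) _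
  have hscale : ((d : ℝ) ^ m * scaleExp d k) / scaleExp d (m + k) ≤ 1 :=
    div_le_one_of_le₀ (by rw [scaleExp_add]; exact_mod_cast Nat.le_add_left _ _) (by positivity)
  calc ((∑ j ∈ range (m + k), N j : ℕ) : ℝ) / scaleExp d (m + k)
      ≤ ((∑ j ∈ range m, N j + N m * scaleExp d k : ℕ) : ℝ) / scaleExp d (m + k) := by
        gcongr
    _ = ((∑ j ∈ range m, N j : ℕ) : ℝ) / scaleExp d (m + k) +
          N m / (d : ℝ) ^ m * (((d : ℝ) ^ m * scaleExp d k) / scaleExp d (m + k)) := by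
        have : (d : ℝ) ^ m ≠ 0 := by positivity
        push_cast
        field_simp
    _ ≤ _ := by
        gcongr
        exact mul_le_of_le_one_right (by positivity) hscale

end Scales

section Dimension

lemma log_div_log_pow_le {N b a : ℕ} (h : N ≤ b ^ a) (E : ℕ) :
    Real.log N / Real.log ((b : ℝ) ^ E) ≤ a / E := by
  rw [Real.log_pow]
  rcases (Real.log_natCast_nonneg b).eq_or_lt with hb | hb
  · simp only [← hb, mul_zero, div_zero]
    positivity
  have hlogN : Real.log N ≤ a * Real.log b := by
    rcases N.eq_zero_or_pos with rfl | hN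
    · simp only [Nat.cast_zero, Real.log_zero]
      positivity
    rw [← Real.log_pow]
    exact Real.log_le_log (by exact_mod_cast hN) (by exact_mod_cast h)
  calc Real.log N / (E * Real.log b) ≤ a * Real.log b / (E * Real.log b) := by gcongr
    _ = a / E := mul_div_mul_right _ _ hb.ne'

variable {V : ℕ → Type*}

lemma dimUpper_le_of_tendsto {d : ℕ} {G : Set (∀ k, Perm (V k))} {a : ℕ → ℕ}
    (hcov : ∀ n, coverNum d G n ≤ d.factorial ^ a n) {g : ℕ → ℝ} {L : ℝ}
    (hag : ∀ᶠ n in atTop, (a n : ℝ) / scaleExp d n ≤ g n) (hg : Tendsto g atTop (𝓝 L)) :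
    dimUpper d G ≤ L := by
  have hlog (n : ℕ) :
      Real.log (1 / treeScale d n) = Real.log ((d.factorial : ℝ) ^ scaleExp d n) := by
    rw [treeScale, one_div, inv_inv]
  have hratio (n : ℕ) := (hlog n).symm ▸ log_div_log_pow_le (hcov n) (scaleExp d n)
  rw [← hg.limsup_eq]
  refine limsup_le_limsup (hag.mono fun n hn ↦ (hratio n).trans hn) ?_ hg.isBoundedUnder_le
  refine isCoboundedUnder_le_of_le atTop fun n ↦ div_nonneg (Real.log_natCast_nonneg _) ?_
  rw [hlog]
  exact Real.log_nonneg (one_le_pow₀ (by exact_mod_cast d.factorial_pos))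

end Dimension

theorem arboreal_noncomplete_small_general {d : ℕ} (hd : 2 ≤ d) (T : DaryTree d)
    (m : ℕ) (hlt : Nat.card (T.V m) < d ^ m) :
    dimUpper d (T.aut : Set (∀ n, Equiv.Perm (T.V n))) ≤
        (Nat.card (T.V m) : ℝ) / (d : ℝ) ^ m ∧
      dimUpper d (T.aut : Set (∀ n, Equiv.Perm (T.V n))) < 1 := by
  have hd0 : 0 < d := by omega
  set A : ℝ := ((∑ j ∈ Finset.range m, Nat.card (T.V j) : ℕ) : ℝ)
  have hbound : ∀ᶠ n in atTop, ((∑ j ∈ Finset.range n, Nat.card (T.V j) : ℕ) : ℝ) / scaleExp d n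
      ≤ A / scaleExp d n + Nat.card (T.V m) / (d : ℝ) ^ m := by
    filter_upwards [eventually_ge_atTop m] with n hn
    obtain ⟨k, rfl⟩ := Nat.exists_eq_add_of_le hn
    exact sum_div_scaleExp_le hd0 (T.card_V_add_le m) k
  have hlim : Tendsto (fun n ↦ A / scaleExp d n + Nat.card (T.V m) / (d : ℝ) ^ m) atTop
      (𝓝 (Nat.card (T.V m) / (d : ℝ) ^ m)) := by
    simpa using (tendsto_const_nhds.div_atTop (tendsto_scaleExp_atTop hd0)).add_const _
  have hdim := dimUpper_le_of_tendsto (coverNum_autGroup_le T.child_ub) hbound hlim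
  refine ⟨hdim, hdim.trans_lt ?_⟩
  rw [div_lt_one (by positivity)]
  exact_mod_cast hlt

/-- **Non-complete trees have automorphism group of upper Minkowski dimension less
than `1`**: if `|L_m| < d^m` at some level `m ≥ 1` then
`dim_upper(Aut T) ≤ |L_m|/d^m < 1`. -/
theorem arboreal_noncomplete_small {d : ℕ} (hd : 2 ≤ d) (T : DaryTree d)
    (m : ℕ) (hm : 1 ≤ m) (hlt : Nat.card (T.V m) < d ^ m) :
    dimUpper d (T.aut : Set (∀ n, Equiv.Perm (T.V n))) ≤
        (Nat.card (T.V m) : ℝ) / (d : ℝ) ^ m ∧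
      dimUpper d (T.aut : Set (∀ n, Equiv.Perm (T.V n))) < 1 :=
  arboreal_noncomplete_small_general hd T m hlt
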